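/- arXiv:2510.04629 — 2 statements merged into one kernel-verified Lean document; each statement's English description precedes it below -/
import Mathlib

section
/- Let a and b be nonreal quaternions (Im a ≠ 0 and Im b ≠ 0). Then there exists a nonzero quaternion p such that p⁻¹ * a * p = b (equivalently, a*p = p*b with p ≠ 0) if and only if Re a = Re b and ‖a‖ = ‖b‖. -/
/-!
Conjugation preserves the real part (since `Re (x * y) = Re (y * x)`) and the norm, which gives
one direction. Conversely, write `u = Im a` and `v = Im b`; equal real parts and norms give
`‖u‖ = ‖v‖`, and since `u ^ 2 = -‖u‖ ^ 2` for imaginary `u`, the quaternion `p = u + v`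
satisfies `u * p = p * v`, hence `a * p = p * b`. When `u + v = 0` one takes instead any
nonzero imaginary `p` orthogonal to `u`, which anticommutes with `u`.
-/

open Quaternion

namespace Quaternion

variable {R : Type*}

section CommRing

variable [CommRing R]

theorem re_mul_comm (x y : ℍ[R]) : (x * y).re = (y * x).re := by
  simp only [re_mul]
  ring

theorem normSq_eq_re_sq_add_normSq_im (x : ℍ[R]) : normSq x = x.re ^ 2 + normSq x.im := by
  simp only [normSq_def', re_im, imI_im, imJ_im, imK_im]
  ring

theorem mul_eq_mul_of_re_eq_of_im_mul_eq {x y p : ℍ[R]} (hre : x.re = y.re)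
    (him : x.im * p = p * y.im) : x * p = p * y := by
  rw [← re_add_im x, ← re_add_im y, add_mul, mul_add, him, hre, coe_commutes]

theorem im_mul_im_add_im_of_normSq_im_eq {x y : ℍ[R]} (h : normSq x.im = normSq y.im) :
    x.im * (x.im + y.im) = (x.im + y.im) * y.im := by
  rw [mul_add, add_mul, ← sq, ← sq, im_sq, im_sq, h]
  abel

theorem mul_eq_neg_mul_of_re_eq_zero {u p : ℍ[R]} (hu : u.re = 0) (hp : p.re = 0)
    (horth : u.imI * p.imI + u.imJ * p.imJ + u.imK * p.imK = 0) : u * p = -(p * u) := by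
  ext <;> simp only [re_mul, imI_mul, imJ_mul, imK_mul, re_neg, imI_neg, imJ_neg, imK_neg, hu, hp]
  · linear_combination (-2) * horth
  all_goals ring

theorem exists_ne_zero_im_mul_eq_neg_mul [Nontrivial R] (x : ℍ[R]) :
    ∃ p : ℍ[R], p ≠ 0 ∧ x.im * p = -(p * x.im) := by
  by_cases h : x.imI = 0 ∧ x.imJ = 0
  · refine ⟨⟨0, 1, 0, 0⟩, fun h0 => one_ne_zero (congrArg (·.imI) h0),
      mul_eq_neg_mul_of_re_eq_zero (re_im x) rfl ?_⟩
    simp [h.1, h.2]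
  · refine ⟨⟨0, x.imJ, -x.imI, 0⟩, fun h0 => h ⟨?_, congrArg (·.imI) h0⟩,
      mul_eq_neg_mul_of_re_eq_zero (re_im x) rfl ?_⟩
    · simpa using congrArg (·.imJ) h0
    · simp only [imI_im, imJ_im, imK_im]
      ring

theorem exists_ne_zero_mul_eq_mul [Nontrivial R] {x y : ℍ[R]} (hre : x.re = y.re)
    (hnormSq : normSq x = normSq y) : ∃ p : ℍ[R], p ≠ 0 ∧ x * p = p * y := by
  have him : normSq x.im = normSq y.im := by
    rw [normSq_eq_re_sq_add_normSq_im x, normSq_eq_re_sq_add_normSq_im y, hre] at hnormSq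
    exact add_left_cancel hnormSq
  by_cases hsum : x.im + y.im = 0
  · obtain ⟨p, hp, hanti⟩ := exists_ne_zero_im_mul_eq_neg_mul x
    refine ⟨p, hp, mul_eq_mul_of_re_eq_of_im_mul_eq hre ?_⟩
    rw [hanti, eq_neg_of_add_eq_zero_right hsum, mul_neg]
  · exact ⟨_, hsum, mul_eq_mul_of_re_eq_of_im_mul_eq hre (im_mul_im_add_im_of_normSq_im_eq him)⟩

end CommRing

theorem re_inv_mul_mul_self [Field R] [LinearOrder R] [IsStrictOrderedRing R] (a : ℍ[R])
    {p : ℍ[R]} (hp : p ≠ 0) : (p⁻¹ * a * p).re = a.re := by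
  rw [re_mul_comm, mul_inv_cancel_left₀ hp]

end Quaternion

theorem norm_inv_mul_mul_self {D : Type*} [NormedDivisionRing D] (a : D) {p : D} (hp : p ≠ 0) :
    ‖p⁻¹ * a * p‖ = ‖a‖ := by
  rw [norm_mul, norm_mul, norm_inv, mul_comm, mul_inv_cancel_left₀ (norm_ne_zero_iff.mpr hp)]

theorem similar_quaternions_characterization_general (a b : ℍ[ℝ]) :
    (∃ p : ℍ[ℝ], p ≠ 0 ∧ p⁻¹ * a * p = b) ↔ a.re = b.re ∧ ‖a‖ = ‖b‖ := by
  constructor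
  · rintro ⟨p, hp, rfl⟩
    exact ⟨(re_inv_mul_mul_self a hp).symm, (norm_inv_mul_mul_self a hp).symm⟩
  · rintro ⟨hre, hnorm⟩
    have hnormSq : normSq a = normSq b := by
      rw [normSq_eq_norm_mul_self, normSq_eq_norm_mul_self, hnorm]
    obtain ⟨p, hp, hmul⟩ := exists_ne_zero_mul_eq_mul hre hnormSq
    exact ⟨p, hp, by rw [mul_assoc, hmul, inv_mul_cancel_left₀ hp]⟩

theorem similar_quaternions_characterization (a b : ℍ[ℝ])
    (ha : a.im ≠ 0) (hb : b.im ≠ 0) :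
    (∃ p : ℍ[ℝ], p ≠ 0 ∧ p⁻¹ * a * p = b) ↔ a.re = b.re ∧ ‖a‖ = ‖b‖ :=
  similar_quaternions_characterization_general a b
end

section
/- Let a and b be quaternions with Re a = Re b and ‖a‖ = ‖b‖. Then for every quaternion q, the quaternion x = (Im a) * q + q * (Im b) satisfies the homogeneous Sylvester equation a*x − x*b = 0. -/
/-!
Writing `a = r + u` and `b = r + v` with `u, v` pure, the real part `r` is central, so
`a x - x b = u x - x v`, and for `x = u q + q v` this is `u² q - q v²`. A pure quaternion squares to
minus its squared norm, and `‖u‖ = ‖v‖` because `a` and `b` share their real part and norm; hence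
`u² = v²` is a real scalar, commutes with `q`, and the difference vanishes.
-/

open Quaternion

theorem mul_mul_add_mul_sub_mul_add_mul_mul {α : Type*} [Ring α] (u v q : α) :
    u * (u * q + q * v) - (u * q + q * v) * v = u ^ 2 * q - q * v ^ 2 := by
  noncomm_ring

namespace Quaternion

variable {R : Type*} [CommRing R]

theorem mul_sub_mul_eq_im_mul_sub_mul_im {a b : ℍ[R]} (h : a.re = b.re) (x : ℍ[R]) :
    a * x - x * b = a.im * x - x * b.im := by
  conv_lhs => rw [← re_add_im a, ← re_add_im b, h]
  rw [add_mul, mul_add, coe_commutes]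
  abel

theorem normSq_eq_re_sq_add_normSq_im_s13 (a : ℍ[R]) : normSq a = a.re ^ 2 + normSq a.im := by
  simp only [normSq_def', re_im, imI_im, imJ_im, imK_im]
  ring

theorem im_sq_eq_im_sq {a b : ℍ[R]} (hre : a.re = b.re) (hn : normSq a = normSq b) :
    a.im ^ 2 = b.im ^ 2 := by
  rw [normSq_eq_re_sq_add_normSq_im_s13 a, normSq_eq_re_sq_add_normSq_im_s13 b, hre, add_right_inj] at hn
  rw [im_sq, im_sq, hn]

end Quaternion

theorem homogeneous_sylvester_solution (a b : ℍ[ℝ])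
    (hre : a.re = b.re) (hnorm : ‖a‖ = ‖b‖) (q : ℍ[ℝ]) :
    a * (a.im * q + q * b.im) - (a.im * q + q * b.im) * b = 0 := by
  have hsq : a.im ^ 2 = b.im ^ 2 :=
    im_sq_eq_im_sq hre (by rw [normSq_eq_norm_mul_self, normSq_eq_norm_mul_self, hnorm])
  rw [mul_sub_mul_eq_im_mul_sub_mul_im hre, mul_mul_add_mul_sub_mul_add_mul_mul, hsq, im_sq,
    ← coe_neg, coe_commutes, sub_self]
end
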